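/- Let G be an AH-algebra and let g ∈ G. Then s := (g⁺)° − (g⁻)° is the unique signum of g, i.e., the unique element of G satisfying: s ∈ C(g) ∩ C(P ∩ C(g)); 0 ≤ sg = gs; g = s²g; and for all h ∈ G, gh = 0 implies sh = 0. Moreover: (i) s ∈ CC(g); (ii) g° = s²; (iii) |g| = sg = gs; (iv) g = s|g| = |g|s; (v) |g|° = g°. -/

import Mathlib

/-!
Write `a = g⁺`, `b = g⁻`, `pa = a°`, `pb = b°`. Since `|g|` is the positive square root of `g²`
and commutes with everything commuting with `g`, the identities `a + b = |g|`, `a - b = g` and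
`ab = ba = 0` follow. Orthogonality passes to the carriers, so `(pa - pb) g = g (pa - pb) = |g|`
and `(pa - pb)² = pa + pb = (a + b)° = |g|° = g°`; and a carrier projection commutes with
everything commuting with its element, which makes `pa - pb` a signum lying in `CC(g)`.
For any signum `s`, `sg` is a positive square root of `g²`, hence equals `|g|`; then
`d = s - (pa - pb)` is annihilated by `g`, so `sd = (pa - pb)d = 0`, `d² = 0` and `d = 0`.

Square roots come from the commutative Vigier property: after scaling `0 ≤ k ≤ 1`, the
supremum `w` of the increasing iteration `t₀ = 0`, `tₙ₊₁ = ½((1 - k) + tₙ²)` gives `√k = 1 - w`.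
-/

/-- An e-ring `(R,E)`: an associative ring `R` with unity together with a set `E ⊆ R`
of effects, satisfying the Foulis axioms.  `E⁺` is realized as the additive submonoid
closure of `E` (the set of all finite sums of effects). -/
structure ERing (R : Type*) [Ring R] where
  E : Set R
  zero_mem : (0 : R) ∈ E
  one_mem : (1 : R) ∈ E
  compl_mem : ∀ e ∈ E, 1 - e ∈ E
  epos_i : ∀ a ∈ AddSubmonoid.closure E, -a ∈ AddSubmonoid.closure E → a = 0
  epos_ii : ∀ a ∈ AddSubmonoid.closure E, 1 - a ∈ AddSubmonoid.closure E → a ∈ E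
  epos_iii : ∀ a ∈ AddSubmonoid.closure E, ∀ b ∈ AddSubmonoid.closure E,
    a * b = b * a → a * b ∈ AddSubmonoid.closure E
  epos_iv : ∀ a ∈ AddSubmonoid.closure E, ∀ b ∈ AddSubmonoid.closure E,
    a * b * a ∈ AddSubmonoid.closure E
  epos_v : ∀ a ∈ AddSubmonoid.closure E, ∀ b ∈ AddSubmonoid.closure E,
    a * b * a = 0 → a * b = 0 ∧ b * a = 0
  epos_vi : ∀ a ∈ AddSubmonoid.closure E, ∀ b ∈ AddSubmonoid.closure E,
    (a - b) ^ 2 ∈ AddSubmonoid.closure E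
  zero_ne_one : (0 : R) ≠ 1

namespace ERing

variable {R : Type*} [Ring R] (er : ERing R)

/-- `E⁺`, the set of all finite sums of effects; the positive cone of the directed group. -/
def Epos : Set R := (AddSubmonoid.closure er.E : Set R)

/-- The directed group `G = E⁺ - E⁺` of the e-ring. -/
def G : Set R := {g | ∃ a ∈ er.Epos, ∃ b ∈ er.Epos, g = a - b}

/-- The partial order on the directed group: `g ≤ h` iff `h - g ∈ E⁺`. -/
def le (g h : R) : Prop := h - g ∈ er.Epos

/-- The set of projections `P = {p ∈ G : p = p²}`. -/
def P : Set R := {p | p ∈ er.G ∧ p = p ^ 2}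

/-- The commutant in `G` of a subset `A ⊆ G`. -/
def commutant (A : Set R) : Set R := {g | g ∈ er.G ∧ ∀ a ∈ A, g * a = a * g}

/-- The bicommutant in `G` of a subset `A ⊆ G`. -/
def CC (A : Set R) : Set R := er.commutant (er.commutant A)

/-- `s` is the supremum of `A` within the subset `S` (w.r.t. the e-ring order). -/
def IsSupIn (S A : Set R) (s : R) : Prop :=
  s ∈ S ∧ (∀ a ∈ A, er.le a s) ∧ ∀ b ∈ S, (∀ a ∈ A, er.le a b) → er.le s b

/-- `s` is the infimum of `A` within the subset `S` (w.r.t. the e-ring order). -/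
def IsInfIn (S A : Set R) (s : R) : Prop :=
  s ∈ S ∧ (∀ a ∈ A, er.le s a) ∧ ∀ b ∈ S, (∀ a ∈ A, er.le b a) → er.le b s

/-- Quadratic annihilation property. -/
def HasQA : Prop := ∀ g ∈ er.G, ∀ h ∈ er.G, g * h ^ 2 * g = 0 → g * h = 0 ∧ h * g = 0

/-- Commutative Vigier property: every ascending sequence of pairwise commuting elements
of `G` bounded above in `G` has a supremum in `G` which double commutes with the sequence. -/
def HasCV : Prop :=
  ∀ g : ℕ → R, (∀ n, g n ∈ er.G) → (∀ n, er.le (g n) (g (n + 1))) →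
    (∀ m n, g m * g n = g n * g m) → (∃ b ∈ er.G, ∀ n, er.le (g n) b) →
    ∃ s, er.IsSupIn er.G (Set.range g) s ∧ s ∈ er.CC (Set.range g)

/-- `G` is an abstract Hermitian (AH) algebra: there is a semitransparent effect `½`,
`G` has quadratic annihilation, and `G` has the commutative Vigier property. -/
def IsAH : Prop := (∃ h ∈ er.E, h + h = 1) ∧ er.HasQA ∧ er.HasCV

end ERing

namespace ERing

variable {R : Type*} [Ring R] (er : ERing R)

/-- `m` is the absolute value `|g| = (g²)^(1/2)` of `g`: `m ∈ G`, `0 ≤ m`, `m² = g²`. -/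
def IsAbs (g m : R) : Prop := m ∈ er.G ∧ er.le 0 m ∧ m ^ 2 = g ^ 2

/-- `a` is the positive part `g⁺ = ½(|g| + g)` of `g`, i.e. `a ∈ G` and `a + a = |g| + g`. -/
def IsPosPart (g a : R) : Prop := a ∈ er.G ∧ ∃ m, er.IsAbs g m ∧ a + a = m + g

/-- `b` is the negative part `g⁻ = ½(|g| − g)` of `g`, i.e. `b ∈ G` and `b + b = |g| − g`. -/
def IsNegPart (g b : R) : Prop := b ∈ er.G ∧ ∃ m, er.IsAbs g m ∧ b + b = m - g

/-- `p` is the carrier projection `g°` of `g`. -/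
def IsCarrier (g p : R) : Prop := p ∈ er.P ∧ ∀ h ∈ er.G, (g * h = 0 ↔ p * h = 0)

end ERing

namespace ERing

variable {R : Type*} [Ring R] (er : ERing R)

/-- `s` is a signum of `g`: `s ∈ C(g) ∩ CPC(g)`, `0 ≤ sg = gs`, `g = s²g`, and
`gh = 0` implies `sh = 0` for all `h ∈ G`. -/
def IsSignum (g s : R) : Prop :=
  s ∈ er.commutant {g} ∧ s ∈ er.commutant (er.P ∩ er.commutant {g}) ∧
  er.le 0 (s * g) ∧ s * g = g * s ∧ g = s ^ 2 * g ∧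
  ∀ h ∈ er.G, g * h = 0 → s * h = 0

end ERing

namespace ERing

variable {R : Type*} [Ring R] {er : ERing R}

section Cone

lemma zero_mem_Epos : (0 : R) ∈ er.Epos := (AddSubmonoid.closure er.E).zero_mem

lemma mem_Epos_of_mem_E {x : R} (hx : x ∈ er.E) : x ∈ er.Epos :=
  AddSubmonoid.subset_closure hx

lemma one_mem_Epos : (1 : R) ∈ er.Epos := mem_Epos_of_mem_E er.one_mem

lemma add_mem_Epos {x y : R} (hx : x ∈ er.Epos) (hy : y ∈ er.Epos) : x + y ∈ er.Epos :=
  (AddSubmonoid.closure er.E).add_mem hx hy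

lemma natCast_mem_Epos (n : ℕ) : (n : R) ∈ er.Epos := by
  simpa [Epos] using (AddSubmonoid.closure er.E).nsmul_mem one_mem_Epos n

lemma exists_natCast_sub_mem_Epos {x : R} (hx : x ∈ er.Epos) :
    ∃ N : ℕ, (N : R) - x ∈ er.Epos := by
  induction hx using AddSubmonoid.closure_induction with
  | mem y hy => exact ⟨1, by simpa using mem_Epos_of_mem_E (er.compl_mem y hy)⟩
  | zero => exact ⟨0, by simpa using zero_mem_Epos⟩
  | add y z _ _ ihy ihz =>
    obtain ⟨N₁, h₁⟩ := ihy
    obtain ⟨N₂, h₂⟩ := ihz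
    refine ⟨N₁ + N₂, ?_⟩
    convert add_mem_Epos h₁ h₂ using 1
    push_cast
    abel

lemma eq_zero_of_mem_Epos_of_neg_mem_Epos {x : R} (hx : x ∈ er.Epos) (hnx : -x ∈ er.Epos) :
    x = 0 :=
  er.epos_i x hx hnx

lemma mul_mem_Epos_of_commute {x y : R} (hx : x ∈ er.Epos) (hy : y ∈ er.Epos)
    (hxy : Commute x y) : x * y ∈ er.Epos :=
  er.epos_iii x hx y hy hxy

lemma conj_mem_Epos {x y : R} (hx : x ∈ er.Epos) (hy : y ∈ er.Epos) : x * y * x ∈ er.Epos :=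
  er.epos_iv x hx y hy

lemma mul_self_sub_mul_self_mem_Epos {x y : R} (hy : y ∈ er.Epos) (hxy : x - y ∈ er.Epos)
    (hc : Commute x y) : x * x - y * y ∈ er.Epos := by
  have hx : x ∈ er.Epos := by simpa using add_mem_Epos hxy hy
  rw [hc.mul_self_sub_mul_self_eq']
  exact mul_mem_Epos_of_commute hxy (add_mem_Epos hx hy)
    (((Commute.refl x).sub_left hc.symm).add_right (hc.sub_left (Commute.refl y)))

end Cone

section Group

lemma mem_G_of_mem_Epos {x : R} (hx : x ∈ er.Epos) : x ∈ er.G :=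
  ⟨x, hx, 0, zero_mem_Epos, (sub_zero x).symm⟩

lemma one_mem_G : (1 : R) ∈ er.G := mem_G_of_mem_Epos one_mem_Epos

lemma add_mem_G {x y : R} (hx : x ∈ er.G) (hy : y ∈ er.G) : x + y ∈ er.G := by
  obtain ⟨a, ha, b, hb, rfl⟩ := hx
  obtain ⟨c, hc, d, hd, rfl⟩ := hy
  exact ⟨a + c, add_mem_Epos ha hc, b + d, add_mem_Epos hb hd, by abel⟩

lemma sub_mem_G {x y : R} (hx : x ∈ er.G) (hy : y ∈ er.G) : x - y ∈ er.G := by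
  obtain ⟨a, ha, b, hb, rfl⟩ := hx
  obtain ⟨c, hc, d, hd, rfl⟩ := hy
  exact ⟨a + d, add_mem_Epos ha hd, b + c, add_mem_Epos hb hc, by abel⟩

lemma mul_self_mem_Epos {x : R} (hx : x ∈ er.G) : x * x ∈ er.Epos := by
  obtain ⟨a, ha, b, hb, rfl⟩ := hx
  simpa [Epos, pow_two] using er.epos_vi a ha b hb

lemma conj_mem_G {e x : R} (he : e ∈ er.Epos) (hx : x ∈ er.G) : e * x * e ∈ er.G := by
  obtain ⟨a, ha, b, hb, rfl⟩ := hx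
  exact ⟨e * a * e, conj_mem_Epos he ha, e * b * e, conj_mem_Epos he hb, by noncomm_ring⟩

end Group

section Half

variable {h : R}

lemma half_mul_add_half_mul (h2 : h + h = 1) (x : R) : h * x + h * x = x := by
  rw [← add_mul, h2, one_mul]

lemma half_mul_add_self (h2 : h + h = 1) (x : R) : h * (x + x) = x := by
  rw [mul_add, half_mul_add_half_mul h2]

lemma eq_of_add_self_eq_add_self (h2 : h + h = 1) {x y : R} (hxy : x + x = y + y) : x = y := by
  rw [← half_mul_add_self h2 x, hxy, half_mul_add_self h2]

lemma commute_half (h2 : h + h = 1) (x : R) : Commute h x :=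
  eq_of_add_self_eq_add_self h2 <| (half_mul_add_half_mul h2 x).trans (by rw [← mul_add, h2, mul_one])

lemma Commute.of_add_self (h2 : h + h = 1) {x a : R} (hxa : Commute x (a + a)) : Commute x a :=
  eq_of_add_self_eq_add_self h2 (by rw [← mul_add, hxa.eq, add_mul])

lemma half_mul_mem_Epos (h2 : h + h = 1) (hE : h ∈ er.E) {x : R} (hx : x ∈ er.Epos) :
    h * x ∈ er.Epos :=
  mul_mem_Epos_of_commute (mem_Epos_of_mem_E hE) hx (commute_half h2 x)

lemma half_mul_mem_G (h2 : h + h = 1) (hE : h ∈ er.E) {x : R} (hx : x ∈ er.G) :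
    h * x ∈ er.G := by
  obtain ⟨a, ha, b, hb, rfl⟩ := hx
  exact ⟨h * a, half_mul_mem_Epos h2 hE ha, h * b, half_mul_mem_Epos h2 hE hb, mul_sub h a b⟩

lemma mul_mem_G_of_commute (h2 : h + h = 1) (hE : h ∈ er.E) {x y : R} (hx : x ∈ er.G)
    (hy : y ∈ er.G) (hxy : Commute x y) : x * y ∈ er.G := by
  have polar : x * y + x * y = (x + y) * (x + y) - x * x - y * y := by
    rw [add_mul, mul_add, mul_add, hxy.eq]
    abel
  rw [← half_mul_add_self h2 (x * y), polar]
  exact half_mul_mem_G h2 hE <| sub_mem_G (sub_mem_G (mem_G_of_mem_Epos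
    (mul_self_mem_Epos (add_mem_G hx hy))) (mem_G_of_mem_Epos (mul_self_mem_Epos hx)))
    (mem_G_of_mem_Epos (mul_self_mem_Epos hy))

end Half

section Annihilation

lemma mul_eq_zero_symm (hqa : er.HasQA) {x y : R} (hx : x ∈ er.G) (hy : y ∈ er.G)
    (hxy : x * y = 0) : y * x = 0 :=
  (hqa y hy x hx (by rw [pow_two, ← mul_assoc, mul_assoc (y * x), hxy, mul_zero])).1

lemma eq_zero_of_mul_self_eq_zero (hqa : er.HasQA) {x : R} (hx : x ∈ er.G)
    (hxx : x * x = 0) : x = 0 := by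
  simpa using (hqa x hx 1 one_mem_G (by simpa using hxx)).1

lemma mul_eq_zero_of_mul_self_mul_eq_zero (hqa : er.HasQA) {a x : R} (ha : a ∈ er.G)
    (hx : x ∈ er.G) (haax : a * a * x = 0) : a * x = 0 :=
  (hqa x hx a ha (by rw [pow_two, mul_assoc, haax, mul_zero])).2

end Annihilation

section Projection

lemma mul_self_eq_of_mem_P {p : R} (hp : p ∈ er.P) : p * p = p := by
  rw [← pow_two]
  exact hp.2.symm

lemma mem_Epos_of_mem_P {p : R} (hp : p ∈ er.P) : p ∈ er.Epos :=
  mul_self_eq_of_mem_P hp ▸ mul_self_mem_Epos hp.1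

lemma mul_one_sub_eq_zero_of_mem_P {p : R} (hp : p ∈ er.P) : p * (1 - p) = 0 := by
  rw [mul_sub, mul_one, mul_self_eq_of_mem_P hp, sub_self]

lemma one_sub_mul_eq_zero_of_mem_P {p : R} (hp : p ∈ er.P) : (1 - p) * p = 0 := by
  rw [sub_mul, one_mul, mul_self_eq_of_mem_P hp, sub_self]

lemma one_sub_mem_P {p : R} (hp : p ∈ er.P) : 1 - p ∈ er.P :=
  ⟨sub_mem_G one_mem_G hp.1, by rw [pow_two, sub_mul, one_mul, mul_one_sub_eq_zero_of_mem_P hp,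
    sub_zero]⟩

end Projection

section Carrier

variable {c p : R}

lemma IsCarrier.mul_eq_zero_iff (hcp : er.IsCarrier c p) {x : R} (hx : x ∈ er.G) :
    c * x = 0 ↔ p * x = 0 :=
  hcp.2 x hx

lemma IsCarrier.mul_eq_left {q : R} (hcp : er.IsCarrier c p) (hcq : er.IsCarrier c q) :
    q * p = q := by
  have hp : c * (1 - p) = 0 :=
    (hcp.mul_eq_zero_iff (one_sub_mem_P hcp.1).1).2 (mul_one_sub_eq_zero_of_mem_P hcp.1)
  have hq := (hcq.mul_eq_zero_iff (one_sub_mem_P hcp.1).1).1 hp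
  rw [mul_sub, mul_one, sub_eq_zero] at hq
  exact hq.symm

lemma IsCarrier.mul_eq_self (hcp : er.IsCarrier c p) : c * p = c := by
  have hp : c * (1 - p) = 0 :=
    (hcp.mul_eq_zero_iff (one_sub_mem_P hcp.1).1).2 (mul_one_sub_eq_zero_of_mem_P hcp.1)
  rw [mul_sub, mul_one, sub_eq_zero] at hp
  exact hp.symm

lemma IsCarrier.self_mul (hqa : er.HasQA) (hc : c ∈ er.G) (hcp : er.IsCarrier c p) :
    p * c = c := by
  have h : (1 - p) * c = 0 := mul_eq_zero_symm hqa hc (one_sub_mem_P hcp.1).1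
    (by rw [mul_sub, mul_one, hcp.mul_eq_self, sub_self])
  rw [sub_mul, one_mul, sub_eq_zero] at h
  exact h.symm

lemma IsCarrier.unique (hqa : er.HasQA) {q : R} (hcp : er.IsCarrier c p)
    (hcq : er.IsCarrier c q) : p = q := by
  have hsq : (p - q) * (p - q) = 0 := by
    have e : (p - q) * (p - q) = p * p - p * q - q * p + q * q := by noncomm_ring
    rw [e, mul_self_eq_of_mem_P hcp.1, mul_self_eq_of_mem_P hcq.1, hcq.mul_eq_left hcp,
      hcp.mul_eq_left hcq]
    abel
  exact sub_eq_zero.mp (eq_zero_of_mul_self_eq_zero hqa (sub_mem_G hcp.1.1 hcq.1.1) hsq)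

/-- The off-diagonal part `d = p x (1 - p) + (1 - p) x p` of `x` is annihilated by `c`, hence by
`p` on both sides, which kills both corners. -/
lemma IsCarrier.commute (hqa : er.HasQA) (hcp : er.IsCarrier c p) {x : R} (hx : x ∈ er.G)
    (hxc : Commute x c) : Commute p x := by
  have hpp := mul_self_eq_of_mem_P hcp.1
  have hp1p := mul_one_sub_eq_zero_of_mem_P hcp.1
  have h1pp := one_sub_mul_eq_zero_of_mem_P hcp.1
  have hc1p : c * (1 - p) = 0 := by rw [mul_sub, mul_one, hcp.mul_eq_self, sub_self]
  set d := p * x * (1 - p) + (1 - p) * x * p with hd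
  have hdG : d ∈ er.G := by
    have e : d = x - (p * x * p + (1 - p) * x * (1 - p)) := by rw [hd]; noncomm_ring
    rw [e]
    exact sub_mem_G hx (add_mem_G (conj_mem_G (mem_Epos_of_mem_P hcp.1) hx)
      (conj_mem_G (mem_Epos_of_mem_P (one_sub_mem_P hcp.1)) hx))
  have hcd : c * d = 0 := by
    have e : c * d = x * (c * (1 - p)) + c * (1 - p) * x * p := by
      rw [hd, mul_add, ← mul_assoc, ← mul_assoc, hcp.mul_eq_self, ← hxc.eq]
      noncomm_ring
    rw [e, hc1p, mul_zero, zero_mul, zero_mul, add_zero]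
  have hpd : p * d = 0 := (hcp.mul_eq_zero_iff hdG).1 hcd
  have hdp : d * p = 0 := mul_eq_zero_symm hqa hcp.1.1 hdG hpd
  have hleft : p * x * (1 - p) = 0 := by
    rw [← hpd, hd, mul_add, ← mul_assoc, ← mul_assoc, ← mul_assoc, ← mul_assoc, hpp, hp1p,
      zero_mul, zero_mul, add_zero]
  have hright : (1 - p) * x * p = 0 := by
    rw [← hdp, hd, add_mul, mul_assoc _ (1 - p), h1pp, mul_zero, zero_add, mul_assoc _ p, hpp]
  rw [mul_sub, mul_one, sub_eq_zero] at hleft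
  rw [sub_mul, sub_mul, one_mul, sub_eq_zero] at hright
  exact hleft.trans hright.symm

lemma IsCarrier.mul_carrier_eq_zero (hqa : er.HasQA) {a b pa pb : R} (hb : b ∈ er.G) (hpa : er.IsCarrier a pa) (hpb : er.IsCarrier b pb) (hab : a * b = 0) :
    pa * pb = 0 := by
  have hpab : pa * b = 0 := (hpa.mul_eq_zero_iff hb).1 hab
  have hbpa : b * pa = 0 := mul_eq_zero_symm hqa hpa.1.1 hb hpab
  exact mul_eq_zero_symm hqa hpb.1.1 hpa.1.1 ((hpb.mul_eq_zero_iff hpa.1.1).1 hbpa)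

lemma mul_eq_zero_of_add_mul_eq_zero (hqa : er.HasQA) {a b x : R} (ha : a ∈ er.G)
    (hx : x ∈ er.G) (hab : a * b = 0) (habx : (a + b) * x = 0) : a * x = 0 := by
  refine mul_eq_zero_of_mul_self_mul_eq_zero hqa ha hx ?_
  have e : a * ((a + b) * x) = a * a * x := by rw [← mul_assoc, mul_add, hab, add_zero]
  rw [← e, habx, mul_zero]

lemma IsCarrier.add (hqa : er.HasQA) {a b pa pb : R} (ha : a ∈ er.G) (hb : b ∈ er.G)
    (hab : a * b = 0) (hba : b * a = 0) (hpa : er.IsCarrier a pa) (hpb : er.IsCarrier b pb) :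
    er.IsCarrier (a + b) (pa + pb) := by
  have hpapb := hpa.mul_carrier_eq_zero hqa hb hpb hab
  have hpbpa := hpb.mul_carrier_eq_zero hqa ha hpa hba
  have hpaa := mul_self_eq_of_mem_P hpa.1
  have hpbb := mul_self_eq_of_mem_P hpb.1
  refine ⟨⟨add_mem_G hpa.1.1 hpb.1.1, ?_⟩, fun x hx => ⟨fun h => ?_, fun h => ?_⟩⟩
  · rw [pow_two, mul_add, add_mul, add_mul, hpaa, hpbb, hpapb, hpbpa, add_zero, zero_add]
  · have hax := mul_eq_zero_of_add_mul_eq_zero hqa ha hx hab h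
    have hbx := mul_eq_zero_of_add_mul_eq_zero hqa hb hx hba (by rwa [add_comm])
    rw [add_mul, (hpa.mul_eq_zero_iff hx).1 hax, (hpb.mul_eq_zero_iff hx).1 hbx, add_zero]
  · have e₁ : pa * ((pa + pb) * x) = pa * x := by
      rw [← mul_assoc, mul_add, hpaa, hpapb, add_zero]
    have e₂ : pb * ((pa + pb) * x) = pb * x := by
      rw [← mul_assoc, mul_add, hpbb, hpbpa, zero_add]
    rw [h, mul_zero] at e₁ e₂
    rw [add_mul, (hpa.mul_eq_zero_iff hx).2 e₁.symm, (hpb.mul_eq_zero_iff hx).2 e₂.symm, add_zero]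

end Carrier

section SquareRoot

variable {h k : R}

/-- For `0 ≤ k ≤ 1` this increasing iteration converges to `1 - √k`: its fixed points `w`
satisfy `w = ½((1 - k) + w²)`, i.e. `(1 - w)² = k`. -/
def sqrtSeq (h k : R) : ℕ → R
  | 0 => 0
  | n + 1 => h * ((1 - k) + sqrtSeq h k n * sqrtSeq h k n)

lemma commute_sqrtSeq (h2 : h + h = 1) {x : R} (hxk : Commute x k) (n : ℕ) :
    Commute x (sqrtSeq h k n) := by
  induction n with
  | zero => exact Commute.zero_right x
  | succ n ih =>
    exact (commute_half h2 x).symm.mul_right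
      (((Commute.one_right x).sub_right hxk).add_right (ih.mul_right ih))

lemma sqrtSeq_commute (h2 : h + h = 1) (m n : ℕ) :
    Commute (sqrtSeq h k m) (sqrtSeq h k n) :=
  commute_sqrtSeq h2 (commute_sqrtSeq h2 (Commute.refl k) m).symm n

lemma sqrtSeq_mem_Epos (h2 : h + h = 1) (hE : h ∈ er.E) (hk1 : 1 - k ∈ er.Epos) (n : ℕ) :
    sqrtSeq h k n ∈ er.Epos := by
  induction n with
  | zero => exact zero_mem_Epos
  | succ n ih =>
    exact half_mul_mem_Epos h2 hE (add_mem_Epos hk1 (mul_mem_Epos_of_commute ih ih (.refl _)))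

lemma one_sub_sqrtSeq_mem_Epos (h2 : h + h = 1) (hE : h ∈ er.E) (hk : k ∈ er.Epos)
    (hk1 : 1 - k ∈ er.Epos) (n : ℕ) : 1 - sqrtSeq h k n ∈ er.Epos := by
  induction n with
  | zero => simpa [sqrtSeq] using one_mem_Epos
  | succ n ih =>
    have e : 1 - sqrtSeq h k (n + 1) = h * (k + (1 * 1 - sqrtSeq h k n * sqrtSeq h k n)) := by
      rw [sqrtSeq]
      nth_rw 1 [← half_mul_add_half_mul h2 1]
      noncomm_ring
    rw [e]
    exact half_mul_mem_Epos h2 hE (add_mem_Epos hk (mul_self_sub_mul_self_mem_Epos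
      (sqrtSeq_mem_Epos h2 hE hk1 n) ih (Commute.one_left _)))

lemma sqrtSeq_succ_sub_mem_Epos (h2 : h + h = 1) (hE : h ∈ er.E) (hk1 : 1 - k ∈ er.Epos)
    (n : ℕ) : sqrtSeq h k (n + 1) - sqrtSeq h k n ∈ er.Epos := by
  induction n with
  | zero => simpa [sqrtSeq] using half_mul_mem_Epos h2 hE hk1
  | succ n ih =>
    have e : sqrtSeq h k (n + 2) - sqrtSeq h k (n + 1) =
        h * (sqrtSeq h k (n + 1) * sqrtSeq h k (n + 1) - sqrtSeq h k n * sqrtSeq h k n) := by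
      change h * ((1 - k) + _) - h * ((1 - k) + _) = _
      rw [← mul_sub, add_sub_add_left_eq_sub]
    rw [e]
    exact half_mul_mem_Epos h2 hE (mul_self_sub_mul_self_mem_Epos
      (sqrtSeq_mem_Epos h2 hE hk1 n) ih (sqrtSeq_commute h2 _ _))

lemma le_sqrtSeq_step_of_isSupIn (h2 : h + h = 1) (hE : h ∈ er.E) (hk1 : 1 - k ∈ er.Epos)
    {w : R} (hw : er.IsSupIn er.G (Set.range (sqrtSeq h k)) w)
    (hwt : ∀ n, Commute w (sqrtSeq h k n)) : er.le w (h * ((1 - k) + w * w)) := by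
  have hub : ∀ n, w - sqrtSeq h k n ∈ er.Epos := fun n => hw.2.1 _ ⟨n, rfl⟩
  have hw0 : w ∈ er.Epos := by simpa [sqrtSeq] using hub 0
  have hu : (1 - k) + w * w ∈ er.Epos :=
    add_mem_Epos hk1 (mul_mem_Epos_of_commute hw0 hw0 (.refl w))
  refine hw.2.2 _ (half_mul_mem_G h2 hE (mem_G_of_mem_Epos hu)) ?_
  rintro _ ⟨n, rfl⟩
  show h * ((1 - k) + w * w) - sqrtSeq h k n ∈ er.Epos
  cases n with
  | zero => simpa [sqrtSeq] using half_mul_mem_Epos h2 hE hu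
  | succ n =>
    change _ - h * ((1 - k) + _) ∈ er.Epos
    rw [← mul_sub, add_sub_add_left_eq_sub]
    exact half_mul_mem_Epos h2 hE
      (mul_self_sub_mul_self_mem_Epos (sqrtSeq_mem_Epos h2 hE hk1 n) (hub n) (hwt n))

lemma sqrtSeq_le_sub_half_of_isSupIn (h2 : h + h = 1) (hE : h ∈ er.E) (hk : k ∈ er.Epos)
    (hk1 : 1 - k ∈ er.Epos) {w : R} (hw : er.IsSupIn er.G (Set.range (sqrtSeq h k)) w)
    (hwt : ∀ n, Commute w (sqrtSeq h k n)) (n : ℕ) :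
    er.le (sqrtSeq h k n) (w - h * (w * w - (w + w - (1 - k)))) := by
  set t := sqrtSeq h k
  set d := w * w - (w + w - (1 - k)) with hd
  have hub : ∀ n, w - t n ∈ er.Epos := fun n => hw.2.1 _ ⟨n, rfl⟩
  have hw1 : 1 - w ∈ er.Epos := hw.2.2 1 one_mem_G <| by
    rintro _ ⟨n, rfl⟩
    exact one_sub_sqrtSeq_mem_Epos h2 hE hk hk1 n
  have hT : t (n + 1) + t (n + 1) = (1 - k) + t n * t n := half_mul_add_half_mul h2 _
  have hprod : (w - t n) * ((1 - w) + (1 - t n)) =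
      w + w - w * w - (t n + t n) + t n * t n := by
    calc _ = w + w - w * w - (t n + t n) + t n * t n + (t n * w - w * t n) := by noncomm_ring
      _ = _ := by rw [(hwt n).eq, sub_self, add_zero]
  have e : (w - t (n + 1)) + (w - t (n + 1)) + (w - t n) * ((1 - w) + (1 - t n)) =
      ((w - h * d) - t n) + ((w - h * d) - t n) := by
    calc _ = (w + w) - (t (n + 1) + t (n + 1)) + (w + w - w * w - (t n + t n) + t n * t n) := by
          rw [hprod]; abel
      _ = (w + w) - (h * d + h * d) - (t n + t n) := by
          rw [hT, half_mul_add_half_mul h2, hd]; abel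
      _ = _ := by abel
  have hcomm : Commute (w - t n) ((1 - w) + (1 - t n)) :=
    (((Commute.one_right w).sub_right (.refl w)).add_right
      ((Commute.one_right w).sub_right (hwt n))).sub_left
    (((Commute.one_right _).sub_right (hwt n).symm).add_right
      ((Commute.one_right _).sub_right (.refl _)))
  show (w - h * d) - t n ∈ er.Epos
  rw [← half_mul_add_self h2 ((w - h * d) - t n), ← e]
  exact half_mul_mem_Epos h2 hE (add_mem_Epos (add_mem_Epos (hub _) (hub _))
    (mul_mem_Epos_of_commute (hub n)
      (add_mem_Epos hw1 (one_sub_sqrtSeq_mem_Epos h2 hE hk hk1 n)) hcomm))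

/-- The defect `d = w² - (2w - (1 - k))` is `≥ 0` because `w ≤ ½((1 - k) + w²)`, and `≤ 0`
because `w - ½d` is still an upper bound of the iteration. -/
lemma mul_self_eq_of_isSupIn_sqrtSeq (h2 : h + h = 1) (hE : h ∈ er.E) (hk : k ∈ er.Epos)
    (hk1 : 1 - k ∈ er.Epos) {w : R} (hw : er.IsSupIn er.G (Set.range (sqrtSeq h k)) w)
    (hwt : ∀ n, Commute w (sqrtSeq h k n)) : w * w = w + w - (1 - k) := by
  set d := w * w - (w + w - (1 - k)) with hd
  have hd0 : d ∈ er.Epos := by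
    have hu := le_sqrtSeq_step_of_isSupIn h2 hE hk1 hw hwt
    convert add_mem_Epos hu hu using 1
    rw [hd, sub_add_sub_comm, half_mul_add_half_mul h2]
    abel
  have hupper : (w - h * d) - w ∈ er.Epos :=
    hw.2.2 _ (sub_mem_G hw.1 (half_mul_mem_G h2 hE (mem_G_of_mem_Epos hd0))) <| by
      rintro _ ⟨n, rfl⟩
      exact sqrtSeq_le_sub_half_of_isSupIn h2 hE hk hk1 hw hwt n
  have hhd : h * d = 0 :=
    eq_zero_of_mem_Epos_of_neg_mem_Epos (half_mul_mem_Epos h2 hE hd0) (by simpa using hupper)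
  rw [← sub_eq_zero, ← hd, ← half_mul_add_half_mul h2 d, hhd, add_zero]

lemma exists_sqrt_of_le_one (h2 : h + h = 1) (hE : h ∈ er.E) (hcv : er.HasCV)
    (hk : k ∈ er.Epos) (hk1 : 1 - k ∈ er.Epos) :
    ∃ s ∈ er.Epos, s * s = k ∧ ∀ x ∈ er.G, Commute x k → Commute x s := by
  have ht : ∀ n, sqrtSeq h k n ∈ er.G := fun n => mem_G_of_mem_Epos (sqrtSeq_mem_Epos h2 hE hk1 n)
  obtain ⟨w, hw, hwcc⟩ := hcv (sqrtSeq h k) ht (sqrtSeq_succ_sub_mem_Epos h2 hE hk1)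
    (fun m n => (sqrtSeq_commute h2 m n).eq) ⟨1, one_mem_G, one_sub_sqrtSeq_mem_Epos h2 hE hk hk1⟩
  have hwcomm : ∀ x ∈ er.G, (∀ n, Commute x (sqrtSeq h k n)) → Commute x w :=
    fun x hx hxt => (hwcc.2 x ⟨hx, by rintro _ ⟨n, rfl⟩; exact (hxt n).eq⟩).symm
  have hww : w * w = w + w - (1 - k) := mul_self_eq_of_isSupIn_sqrtSeq h2 hE hk hk1 hw
    fun n => (hwcomm _ (ht n) (sqrtSeq_commute h2 n)).symm
  refine ⟨1 - w, hw.2.2 1 one_mem_G ?_, ?_, fun x hx hxk =>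
    (Commute.one_right x).sub_right (hwcomm x hx (commute_sqrtSeq h2 hxk))⟩
  · rintro _ ⟨n, rfl⟩
    exact one_sub_sqrtSeq_mem_Epos h2 hE hk hk1 n
  · calc (1 - w) * (1 - w) = 1 - (w + w) + w * w := by noncomm_ring
      _ = k := by rw [hww]; abel

lemma exists_sqrt_of_le_four_pow (h2 : h + h = 1) (hE : h ∈ er.E) (hcv : er.HasCV) (j : ℕ)
    (hk : k ∈ er.Epos) (hkj : (4 : R) ^ j - k ∈ er.Epos) :
    ∃ s ∈ er.Epos, s * s = k ∧ ∀ x ∈ er.G, Commute x k → Commute x s := by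
  induction j generalizing k with
  | zero => exact exists_sqrt_of_le_one h2 hE hcv hk (by simpa using hkj)
  | succ j ih =>
    have hquarter : (4 : R) ^ j - h * (h * k) = h * (h * ((4 : R) ^ (j + 1) - k)) := by
      rw [mul_sub, mul_sub, show (4 : R) ^ (j + 1) = (4 ^ j + 4 ^ j) + (4 ^ j + 4 ^ j) by
        rw [pow_succ]; noncomm_ring, half_mul_add_self h2, half_mul_add_self h2]
    obtain ⟨s, hs, hss, hscomm⟩ := ih (half_mul_mem_Epos h2 hE (half_mul_mem_Epos h2 hE hk))
      (hquarter ▸ half_mul_mem_Epos h2 hE (half_mul_mem_Epos h2 hE hkj))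
    refine ⟨s + s, add_mem_Epos hs hs, ?_, fun x hx hxk => ?_⟩
    · calc (s + s) * (s + s) = (s * s + s * s) + (s * s + s * s) := by noncomm_ring
        _ = k := by rw [hss, half_mul_add_half_mul h2, half_mul_add_half_mul h2]
    · have hxs := hscomm x hx
        ((commute_half h2 x).symm.mul_right ((commute_half h2 x).symm.mul_right hxk))
      exact hxs.add_right hxs

lemma exists_sqrt (h2 : h + h = 1) (hE : h ∈ er.E) (hcv : er.HasCV) (hk : k ∈ er.Epos) :
    ∃ s ∈ er.Epos, s * s = k ∧ ∀ x ∈ er.G, Commute x k → Commute x s := by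
  obtain ⟨N, hN⟩ := exists_natCast_sub_mem_Epos hk
  refine exists_sqrt_of_le_four_pow h2 hE hcv N hk ?_
  have e : (4 : R) ^ N - k = ((4 ^ N - N : ℕ) : R) + ((N : R) - k) := by
    rw [Nat.cast_sub (Nat.lt_pow_self (by norm_num)).le]
    push_cast
    abel
  rw [e]
  exact add_mem_Epos (natCast_mem_Epos _) hN

/-- With `u = m - s`: `u(m + s) = 0`, so the positive elements `u²m` and `u²s` add up to `0`;
hence both vanish, `u³ = 0` and `u = 0` by quadratic annihilation. -/
lemma eq_of_mul_self_eq_of_commute (hqa : er.HasQA) {m s : R} (hm : m ∈ er.G)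
    (hm0 : m ∈ er.Epos) (hs0 : s ∈ er.Epos) (hms : m * m = s * s) (hc : Commute m s) :
    m = s := by
  set u := m - s with hu_def
  have hu : u ∈ er.G := sub_mem_G hm (mem_G_of_mem_Epos hs0)
  have huu : u * u ∈ er.Epos := mul_self_mem_Epos hu
  have hum : Commute u m := (Commute.refl m).sub_left hc.symm
  have hus : Commute u s := hc.sub_left (Commute.refl s)
  have hsum : u * u * m + u * u * s = 0 := by
    rw [← mul_add, mul_assoc, hu_def, ← hc.mul_self_sub_mul_self_eq', hms, sub_self, mul_zero]
  have hA : u * u * m = 0 :=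
    eq_zero_of_mem_Epos_of_neg_mem_Epos (mul_mem_Epos_of_commute huu hm0 (hum.mul_left hum))
      (neg_eq_of_add_eq_zero_right hsum ▸ mul_mem_Epos_of_commute huu hs0 (hus.mul_left hus))
  have hB : u * u * s = 0 := by rwa [hA, zero_add] at hsum
  have huuu : u * u * u = 0 := by
    calc u * u * u = u * u * m - u * u * s := mul_sub (u * u) m s
      _ = 0 := by rw [hA, hB, sub_zero]
  have huu0 : u * u = 0 := eq_zero_of_mul_self_eq_zero hqa (mem_G_of_mem_Epos huu)
    (by rw [← mul_assoc, huuu, zero_mul])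
  exact sub_eq_zero.mp (eq_zero_of_mul_self_eq_zero hqa hu huu0)

end SquareRoot

section AbsoluteValue

variable {g m : R}

lemma IsAbs.mem_Epos (hm : er.IsAbs g m) : m ∈ er.Epos := by
  simpa [ERing.le] using hm.2.1

lemma IsAbs.mul_self_eq (hm : er.IsAbs g m) : m * m = g * g := by
  simpa [pow_two] using hm.2.2

lemma IsAbs.eq_of_sqrt (hqa : er.HasQA) (hm : er.IsAbs g m) {s : R} (hs0 : s ∈ er.Epos)
    (hss : s * s = g * g) (hscomm : ∀ x ∈ er.G, Commute x (g * g) → Commute x s) : m = s :=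
  eq_of_mul_self_eq_of_commute hqa hm.1 hm.mem_Epos hs0 (hm.mul_self_eq.trans hss.symm)
    (hscomm m hm.1 (hm.mul_self_eq ▸ (Commute.refl m).mul_right (Commute.refl m)))

lemma IsAbs.unique (hAH : er.IsAH) {m' : R} (hm : er.IsAbs g m) (hm' : er.IsAbs g m') :
    m = m' := by
  obtain ⟨⟨h, hE, h2⟩, hqa, hcv⟩ := hAH
  obtain ⟨s, hs0, hss, hscomm⟩ :=
    exists_sqrt h2 hE hcv (hm.mul_self_eq ▸ mul_self_mem_Epos hm.1)
  rw [hm.eq_of_sqrt hqa hs0 hss hscomm, hm'.eq_of_sqrt hqa hs0 hss hscomm]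

lemma IsAbs.commute (hAH : er.IsAH) (hm : er.IsAbs g m) {x : R} (hx : x ∈ er.G)
    (hxg : Commute x g) : Commute x m := by
  obtain ⟨⟨h, hE, h2⟩, hqa, hcv⟩ := hAH
  obtain ⟨s, hs0, hss, hscomm⟩ :=
    exists_sqrt h2 hE hcv (hm.mul_self_eq ▸ mul_self_mem_Epos hm.1)
  rw [hm.eq_of_sqrt hqa hs0 hss hscomm]
  exact hscomm x hx (hxg.mul_right hxg)

lemma IsAbs.mul_eq_zero_iff (hqa : er.HasQA) (hg : g ∈ er.G) (hm : er.IsAbs g m) {x : R}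
    (hx : x ∈ er.G) : g * x = 0 ↔ m * x = 0 :=
  ⟨fun h => mul_eq_zero_of_mul_self_mul_eq_zero hqa hm.1 hx
      (by rw [hm.mul_self_eq, mul_assoc, h, mul_zero]),
    fun h => mul_eq_zero_of_mul_self_mul_eq_zero hqa hg hx
      (by rw [← hm.mul_self_eq, mul_assoc, h, mul_zero])⟩

lemma IsCarrier.of_isAbs (hqa : er.HasQA) (hg : g ∈ er.G) (hm : er.IsAbs g m) {p : R}
    (hp : er.IsCarrier g p) : er.IsCarrier m p :=
  ⟨hp.1, fun _ hx => (hm.mul_eq_zero_iff hqa hg hx).symm.trans (hp.mul_eq_zero_iff hx)⟩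

end AbsoluteValue

section Parts

variable {g m a b : R}

lemma mul_eq_zero_of_add_self_mul_add_self {h : R} (h2 : h + h = 1)
    (hab : (a + a) * (b + b) = 0) : a * b = 0 := by
  have e : (a + a) * (b + b) = (a * b + a * b) + (a * b + a * b) := by noncomm_ring
  have h1 : a * b + a * b = 0 := eq_of_add_self_eq_add_self h2 (by rw [← e, hab, add_zero])
  exact eq_of_add_self_eq_add_self h2 (by rw [h1, add_zero])

lemma IsPosPart.add_self_eq (hAH : er.IsAH) (hm : er.IsAbs g m) (ha : er.IsPosPart g a) :
    a + a = m + g := by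
  obtain ⟨-, m', hm', h⟩ := ha
  rwa [hm'.unique hAH hm] at h

lemma IsNegPart.add_self_eq (hAH : er.IsAH) (hm : er.IsAbs g m) (hb : er.IsNegPart g b) :
    b + b = m - g := by
  obtain ⟨-, m', hm', h⟩ := hb
  rwa [hm'.unique hAH hm] at h

lemma IsPosPart.add_neg_part (hAH : er.IsAH) (hm : er.IsAbs g m) (ha : er.IsPosPart g a)
    (hb : er.IsNegPart g b) : a + b = m := by
  obtain ⟨h, -, h2⟩ := hAH.1
  refine eq_of_add_self_eq_add_self h2 ?_
  rw [add_add_add_comm, ha.add_self_eq hAH hm, hb.add_self_eq hAH hm]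
  abel

lemma IsPosPart.sub_neg_part (hAH : er.IsAH) (hm : er.IsAbs g m) (ha : er.IsPosPart g a)
    (hb : er.IsNegPart g b) : a - b = g := by
  obtain ⟨h, -, h2⟩ := hAH.1
  refine eq_of_add_self_eq_add_self h2 ?_
  rw [sub_add_sub_comm, ha.add_self_eq hAH hm, hb.add_self_eq hAH hm]
  abel

lemma IsPosPart.mul_neg_part (hAH : er.IsAH) (hg : g ∈ er.G) (hm : er.IsAbs g m)
    (ha : er.IsPosPart g a) (hb : er.IsNegPart g b) : a * b = 0 := by
  obtain ⟨h, -, h2⟩ := hAH.1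
  refine mul_eq_zero_of_add_self_mul_add_self h2 ?_
  rw [ha.add_self_eq hAH hm, hb.add_self_eq hAH hm,
    ← (hm.commute hAH hg (Commute.refl g)).symm.mul_self_sub_mul_self_eq, hm.mul_self_eq, sub_self]

lemma IsNegPart.mul_pos_part (hAH : er.IsAH) (hg : g ∈ er.G) (hm : er.IsAbs g m)
    (ha : er.IsPosPart g a) (hb : er.IsNegPart g b) : b * a = 0 := by
  obtain ⟨h, -, h2⟩ := hAH.1
  refine mul_eq_zero_of_add_self_mul_add_self h2 ?_
  rw [ha.add_self_eq hAH hm, hb.add_self_eq hAH hm,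
    ← (hm.commute hAH hg (Commute.refl g)).symm.mul_self_sub_mul_self_eq', hm.mul_self_eq,
    sub_self]

end Parts

section Signum

variable {g : R}

lemma sub_carrier_mul_sub (hqa : er.HasQA) {a b pa pb : R} (ha : a ∈ er.G) (hb : b ∈ er.G)
    (hab : a * b = 0) (hba : b * a = 0) (hpa : er.IsCarrier a pa) (hpb : er.IsCarrier b pb) :
    (pa - pb) * (a - b) = a + b := by
  rw [sub_mul, mul_sub, mul_sub, hpa.self_mul hqa ha, hpb.self_mul hqa hb,
    (hpa.mul_eq_zero_iff hb).1 hab, (hpb.mul_eq_zero_iff ha).1 hba]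
  abel

lemma sub_mul_sub_carrier (hqa : er.HasQA) {a b pa pb : R} (ha : a ∈ er.G) (hb : b ∈ er.G)
    (hab : a * b = 0) (hba : b * a = 0) (hpa : er.IsCarrier a pa) (hpb : er.IsCarrier b pb) :
    (a - b) * (pa - pb) = a + b := by
  rw [sub_mul, mul_sub, mul_sub, hpa.mul_eq_self, hpb.mul_eq_self,
    mul_eq_zero_symm hqa hpb.1.1 ha ((hpb.mul_eq_zero_iff ha).1 hba),
    mul_eq_zero_symm hqa hpa.1.1 hb ((hpa.mul_eq_zero_iff hb).1 hab)]
  abel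

lemma sub_carrier_sq (hqa : er.HasQA) {a b pa pb : R} (ha : a ∈ er.G) (hb : b ∈ er.G)
    (hab : a * b = 0) (hba : b * a = 0) (hpa : er.IsCarrier a pa) (hpb : er.IsCarrier b pb) :
    (pa - pb) ^ 2 = pa + pb := by
  rw [pow_two, sub_mul, mul_sub, mul_sub, mul_self_eq_of_mem_P hpa.1, mul_self_eq_of_mem_P hpb.1,
    hpa.mul_carrier_eq_zero hqa hb hpb hab, hpb.mul_carrier_eq_zero hqa ha hpa hba]
  abel

lemma commute_sub_carrier (hAH : er.IsAH) {m a b pa pb : R} (hm : er.IsAbs g m)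
    (ha : er.IsPosPart g a) (hb : er.IsNegPart g b) (hpa : er.IsCarrier a pa)
    (hpb : er.IsCarrier b pb) {x : R} (hx : x ∈ er.G) (hxg : Commute x g) :
    Commute (pa - pb) x := by
  obtain ⟨h, -, h2⟩ := hAH.1
  have hxm := hm.commute hAH hx hxg
  have hxa : Commute x a :=
    Commute.of_add_self h2 (by rw [ha.add_self_eq hAH hm]; exact hxm.add_right hxg)
  have hxb : Commute x b :=
    Commute.of_add_self h2 (by rw [hb.add_self_eq hAH hm]; exact hxm.sub_right hxg)
  exact (hpa.commute hAH.2.1 hx hxa).sub_left (hpb.commute hAH.2.1 hx hxb)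

lemma isSignum_of_sq_eq_carrier (hqa : er.HasQA) (hg : g ∈ er.G) {s m p : R} (hs : s ∈ er.G)
    (hcomm : ∀ x ∈ er.G, Commute x g → Commute s x) (hm : er.IsAbs g m) (hsg : s * g = m)
    (hgs : g * s = m) (hp : er.IsCarrier g p) (hsp : s ^ 2 = p) : er.IsSignum g s := by
  refine ⟨⟨hs, ?_⟩, ⟨hs, ?_⟩, ?_, hsg.trans hgs.symm, ?_, fun x hx hgx => ?_⟩
  · rintro _ rfl
    exact hsg.trans hgs.symm
  · rintro x ⟨-, hxG, hxg⟩
    exact hcomm x hxG (hxg g rfl)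
  · simpa [ERing.le, hsg] using hm.mem_Epos
  · rw [hsp, hp.self_mul hqa hg]
  · refine mul_eq_zero_of_mul_self_mul_eq_zero hqa hs hx ?_
    rw [← pow_two, hsp]
    exact (hp.mul_eq_zero_iff hx).1 hgx

lemma IsSignum.isAbs_mul {h : R} (h2 : h + h = 1) (hE : h ∈ er.E) (hg : g ∈ er.G) {s : R}
    (hs : er.IsSignum g s) : er.IsAbs g (s * g) := by
  obtain ⟨⟨hsG, -⟩, -, hpos, hsg, hsq, -⟩ := hs
  refine ⟨mul_mem_G_of_commute h2 hE hsG hg hsg, hpos, ?_⟩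
  calc (s * g) ^ 2 = s * (g * s) * g := by noncomm_ring
    _ = s ^ 2 * g * g := by rw [← hsg]; noncomm_ring
    _ = g ^ 2 := by rw [← hsq, pow_two]

lemma IsSignum.eq_of_mul_eq (hqa : er.HasQA) {s s' : R} (hs : er.IsSignum g s)
    (hs' : er.IsSignum g s') (hss' : s * g = s' * g) : s = s' := by
  have hd : s - s' ∈ er.G := sub_mem_G hs.1.1 hs'.1.1
  have hgd : g * (s - s') = 0 := by
    rw [mul_sub, ← hs.2.2.2.1, ← hs'.2.2.2.1, hss', sub_self]
  have hdd : (s - s') * (s - s') = 0 := by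
    rw [sub_mul, hs.2.2.2.2.2 _ hd hgd, hs'.2.2.2.2.2 _ hd hgd, sub_self]
  exact sub_eq_zero.mp (eq_zero_of_mul_self_eq_zero hqa hd hdd)

lemma IsSignum.unique (hAH : er.IsAH) (hg : g ∈ er.G) {s s' : R} (hs : er.IsSignum g s)
    (hs' : er.IsSignum g s') : s = s' := by
  obtain ⟨h, hE, h2⟩ := hAH.1
  exact hs.eq_of_mul_eq hAH.2.1 hs'
    ((hs.isAbs_mul h2 hE hg).unique hAH (hs'.isAbs_mul h2 hE hg))

end Signum

end ERing

/-- In an AH-algebra, `s := (g⁺)° − (g⁻)°` is the unique signum of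
`g`; moreover `s ∈ CC(g)`, `g° = s²`, `|g| = sg = gs`, `g = s|g| = |g|s`, and
`|g|° = g°`. -/
theorem stmt10 {R : Type*} [Ring R] (er : ERing R) (hAH : er.IsAH)
    (g m a b pa pb pg pm : R) (hg : g ∈ er.G) (hm : er.IsAbs g m)
    (ha : er.IsPosPart g a) (hb : er.IsNegPart g b)
    (hpa : er.IsCarrier a pa) (hpb : er.IsCarrier b pb)
    (hpg : er.IsCarrier g pg) (hpm : er.IsCarrier m pm) :
    er.IsSignum g (pa - pb) ∧ (∀ s, er.IsSignum g s → s = pa - pb) ∧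
    (pa - pb) ∈ er.CC {g} ∧ pg = (pa - pb) ^ 2 ∧
    m = (pa - pb) * g ∧ m = g * (pa - pb) ∧
    g = (pa - pb) * m ∧ g = m * (pa - pb) ∧ pm = pg := by
  open ERing in
  have hqa := hAH.2.1
  have hab := ha.mul_neg_part hAH hg hm hb
  have hba := hb.mul_pos_part hAH hg hm ha
  have hadd := ha.add_neg_part hAH hm hb
  have hsub := ha.sub_neg_part hAH hm hb
  have hpmg : pm = pg := hpm.unique hqa (hpg.of_isAbs hqa hg hm)
  have hsq : (pa - pb) ^ 2 = pg := by
    rw [sub_carrier_sq hqa ha.1 hb.1 hab hba hpa hpb, ← hpmg]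
    exact (hadd ▸ IsCarrier.add hqa ha.1 hb.1 hab hba hpa hpb).unique hqa hpm
  have hsg : (pa - pb) * g = m := by
    rw [← hsub, sub_carrier_mul_sub hqa ha.1 hb.1 hab hba hpa hpb, hadd]
  have hgs : g * (pa - pb) = m := by
    rw [← hsub, sub_mul_sub_carrier hqa ha.1 hb.1 hab hba hpa hpb, hadd]
  have hcomm : ∀ x ∈ er.G, Commute x g → Commute (pa - pb) x :=
    fun _ hx hxg => commute_sub_carrier hAH hm ha hb hpa hpb hx hxg
  have hs := isSignum_of_sq_eq_carrier hqa hg (sub_mem_G hpa.1.1 hpb.1.1) hcomm hm hsg hgs hpg hsq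
  refine ⟨hs, fun s hs' => hs'.unique hAH hg hs, ⟨hs.1.1, fun x hx => hcomm x hx.1 (hx.2 g rfl)⟩,
    hsq.symm, hsg.symm, hgs.symm, ?_, ?_, hpmg⟩
  · rw [← hsg, ← mul_assoc, ← pow_two, hsq, hpg.self_mul hqa hg]
  · rw [← hgs, mul_assoc, ← pow_two, hsq, hpg.mul_eq_self]
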